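/- arXiv:2210.01732 — 3 statements merged into one kernel-verified Lean document; each statement's English description precedes it below -/
import Mathlib

section
/- The exponential conjunction robustness A^exp(η_1,...,η_M) = β·η_min + (1-β)·(1/M)·Σ_i η_i^conj is sound: A^exp ≥ 0 if and only if η_i ≥ 0 for all i. -/
/-- Effective conjunction robustness `η_i^conj`. -/
noncomputable def etaConj (ηmin ηi : ℝ) : ℝ :=
  if ηmin < 0 then ηmin * Real.exp ((ηi - ηmin) / ηmin)
  else if 0 < ηmin then ηmin * (2 - Real.exp ((ηmin - ηi) / ηmin))
  else 0

theorem Aexp_sound {M : ℕ} (hM : 0 < M) (β : ℝ) (hβ0 : 0 ≤ β) (hβ1 : β ≤ 1)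
    (η : Fin M → ℝ) :
    haveI : Nonempty (Fin M) := Fin.pos_iff_nonempty.mp hM
    let ηmin := Finset.univ.inf' Finset.univ_nonempty η
    let Aexp := β * ηmin + (1 - β) * (1 / (M : ℝ)) * ∑ i, etaConj ηmin (η i)
    (0 ≤ Aexp ↔ ∀ i, 0 ≤ η i) := by
  haveI : Nonempty (Fin M) := Fin.pos_iff_nonempty.mp hM
  intro ηmin Aexp
  have hle : ∀ i, ηmin ≤ η i := fun i => Finset.inf'_le _ (Finset.mem_univ i)
  obtain ⟨i0, -, hi0⟩ := Finset.exists_mem_eq_inf' Finset.univ_nonempty η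
  have hMpos : (0:ℝ) < M := Nat.cast_pos.mpr hM
  rcases lt_trichotomy ηmin 0 with hneg | hzero | hpos
  · constructor
    · intro hA
      exfalso
      have hterm : ∀ i : Fin M, etaConj ηmin (η i) < 0 := by
        intro i
        simp only [etaConj, if_pos hneg]
        exact mul_neg_of_neg_of_pos hneg (Real.exp_pos _)
      have hsum : ∑ i, etaConj ηmin (η i) < 0 :=
        Finset.sum_neg (fun i _ => hterm i) Finset.univ_nonempty
      rcases eq_or_lt_of_le hβ1 with hb | hb
      · have hAe : Aexp = ηmin := by
          show β * ηmin + (1 - β) * (1 / (M:ℝ)) * ∑ i, etaConj ηmin (η i) = ηmin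
          rw [hb]; ring
        rw [hAe] at hA; linarith
      · have h1 : β * ηmin ≤ 0 := mul_nonpos_of_nonneg_of_nonpos hβ0 hneg.le
        have h2 : (1 - β) * (1 / (M:ℝ)) * ∑ i, etaConj ηmin (η i) < 0 := by
          apply mul_neg_of_pos_of_neg _ hsum
          have : (0:ℝ) < 1 / M := by positivity
          nlinarith
        have : Aexp < 0 := by
          have := add_lt_add_of_le_of_lt h1 h2
          simpa [Aexp] using this
        linarith
    · intro hall
      exfalso
      have := hall i0
      rw [← hi0] at this
      linarith
  · constructor
    · intro _ i
      have := hle i; rw [hzero] at this; exact this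
    · intro _
      have hAe : Aexp = 0 := by
        simp [Aexp, etaConj, hzero]
      rw [hAe]
  · constructor
    · intro _ i
      exact (hpos.trans_le (hle i)).le
    · intro _
      have hterm : ∀ i : Fin M, 0 ≤ etaConj ηmin (η i) := by
        intro i
        simp only [etaConj, if_neg (not_lt.mpr hpos.le), if_pos hpos]
        apply mul_nonneg hpos.le
        have hx : (ηmin - η i) / ηmin ≤ 0 :=
          div_nonpos_of_nonpos_of_nonneg (by linarith [hle i]) hpos.le
        have := Real.exp_le_one_iff.mpr hx
        linarith
      have hsum : 0 ≤ ∑ i, etaConj ηmin (η i) :=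
        Finset.sum_nonneg (fun i _ => hterm i)
      have h1 : 0 ≤ β * ηmin := mul_nonneg hβ0 hpos.le
      have h2 : 0 ≤ (1 - β) * (1 / (M:ℝ)) * ∑ i, etaConj ηmin (η i) := by
        apply mul_nonneg _ hsum
        apply mul_nonneg (by linarith) (by positivity)
      have : (0:ℝ) ≤ β * ηmin + (1 - β) * (1 / (M:ℝ)) * ∑ i, etaConj ηmin (η i) := by
        linarith
      simpa [Aexp] using this
end

section
/- The exponential conjunction robustness A^exp has the same sign as η_min: A^exp > 0 iff η_min > 0, A^exp < 0 iff η_min < 0, and A^exp = 0 iff η_min = 0. -/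
theorem Aexp_sign {M : ℕ} (hM : 0 < M) (β : ℝ) (hβ0 : 0 ≤ β) (hβ1 : β ≤ 1)
    (η : Fin M → ℝ) :
    haveI : Nonempty (Fin M) := Fin.pos_iff_nonempty.mp hM
    let ηmin := Finset.univ.inf' Finset.univ_nonempty η
    let Aexp := β * ηmin + (1 - β) * (1 / (M : ℝ)) * ∑ i, etaConj ηmin (η i)
    (0 < Aexp ↔ 0 < ηmin) ∧ (Aexp < 0 ↔ ηmin < 0) ∧ (Aexp = 0 ↔ ηmin = 0) := by
  haveI : Nonempty (Fin M) := Fin.pos_iff_nonempty.mp hM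
  intro ηmin Aexp
  have hle : ∀ i, ηmin ≤ η i := fun i => Finset.inf'_le _ (Finset.mem_univ i)
  have hMpos : (0:ℝ) < (M:ℝ) := by exact_mod_cast hM
  have hAdef : Aexp = β * ηmin + (1 - β) * (1 / (M : ℝ)) * ∑ i, etaConj ηmin (η i) := rfl
  have key : (ηmin < 0 → Aexp < 0) ∧ (ηmin = 0 → Aexp = 0) ∧ (0 < ηmin → 0 < Aexp) := by
    refine ⟨?_, ?_, ?_⟩
    · intro h
      have hS : (∑ i, etaConj ηmin (η i)) < 0 := by
        apply Finset.sum_neg (fun i _ => ?_) Finset.univ_nonempty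
        rw [etaConj, if_pos h]
        exact mul_neg_of_neg_of_pos h (Real.exp_pos _)
      rw [hAdef]
      rcases eq_or_lt_of_le hβ0 with hb | hb
      · rw [← hb]
        have : (1 / (M:ℝ)) > 0 := by positivity
        nlinarith
      · have h1 : β * ηmin < 0 := mul_neg_of_pos_of_neg hb h
        have h2 : (1 - β) * (1 / (M:ℝ)) * ∑ i, etaConj ηmin (η i) ≤ 0 := by
          apply mul_nonpos_of_nonneg_of_nonpos
          · apply mul_nonneg (by linarith) (by positivity)
          · exact le_of_lt hS
        linarith
    · intro h
      have hS : ∀ i : Fin M, etaConj ηmin (η i) = 0 := by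
        intro i; rw [etaConj, h]; simp
      rw [hAdef, h]
      have : (∑ i : Fin M, etaConj 0 (η i)) = 0 :=
        Finset.sum_eq_zero fun i _ => h ▸ hS i
      rw [this]; ring
    · intro h
      have hS : 0 < (∑ i, etaConj ηmin (η i)) := by
        apply Finset.sum_pos (fun i _ => ?_) Finset.univ_nonempty
        rw [etaConj, if_neg (not_lt.mpr h.le), if_pos h]
        apply mul_pos h
        have : Real.exp ((ηmin - η i) / ηmin) ≤ 1 := by
          rw [Real.exp_le_one_iff]
          apply div_nonpos_of_nonpos_of_nonneg
          · linarith [hle i]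
          · exact h.le
        linarith
      rw [hAdef]
      rcases eq_or_lt_of_le hβ0 with hb | hb
      · rw [← hb]
        have : (1 / (M:ℝ)) > 0 := by positivity
        nlinarith
      · have h1 : 0 < β * ηmin := mul_pos hb h
        have h2 : 0 ≤ (1 - β) * (1 / (M:ℝ)) * ∑ i, etaConj ηmin (η i) := by
          apply mul_nonneg
          · apply mul_nonneg (by linarith) (by positivity)
          · exact hS.le
        linarith
  obtain ⟨k1, k2, k3⟩ := key
  refine ⟨⟨?_, k3⟩, ⟨?_, k1⟩, ⟨?_, k2⟩⟩ <;> intro h <;>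
    rcases lt_trichotomy ηmin 0 with hm | hm | hm
  · linarith [k1 hm]
  · rw [k2 hm] at h; linarith
  · exact hm
  · exact hm
  · rw [k2 hm] at h; linarith
  · linarith [k3 hm]
  · linarith [k1 hm]
  · exact hm
  · linarith [k3 hm]
end

section
/- For M = 2 and β ∈ [0,1), at any point with η_1 < η_2 (so η_min = η_1 ≠ 0 unique), the partial derivative of A^exp with respect to the minimum argument η_1 is strictly greater than the partial derivative with respect to η_2. -/
/-- Exponential conjunction robustness for `M = 2` in the region where the first
argument is the minimum: `A^exp(a,b) = β·a + (1-β)·(1/2)·(a + η^conj(b))`. -/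
noncomputable def Aexp2 (β a b : ℝ) : ℝ :=
  β * a + (1 - β) * (1 / 2) * (a + etaConj a b)


/-!
Both partial derivatives are affine in the partials of `η^conj`:
`∂_b A = (1-β)/2 · ∂_b η^conj` and `∂_a A = β + (1-β)/2 · (1 + ∂_a η^conj)`,
so it suffices that `∂_b η^conj < 1 + ∂_a η^conj`. With `E = exp ((b-a)/a)` (resp.
`exp ((a-b)/a)`) and `u < 0` the exponent, this reads `E (1 + u) < 1` for `a < 0` and
`E (3 - u) < 3` for `a > 0`; both follow from `exp u · (1 - u) < 1`, i.e. `1 - u < exp (-u)`.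
-/

open Real Filter Topology

lemma etaConj_of_neg {a : ℝ} (ha : a < 0) (b : ℝ) : etaConj a b = a * exp ((b - a) / a) := by
  simp [etaConj, ha]

lemma etaConj_of_pos {a : ℝ} (ha : 0 < a) (b : ℝ) :
    etaConj a b = a * (2 - exp ((a - b) / a)) := by
  simp [etaConj, ha, ha.not_gt]

lemma exp_mul_one_sub_lt_one {u : ℝ} (hu : u ≠ 0) : exp u * (1 - u) < 1 := by
  calc exp u * (1 - u) < exp u * exp (-u) := by gcongr; exact one_sub_lt_exp_neg hu
    _ = 1 := by rw [← exp_add, add_neg_cancel, exp_zero]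

section Derivatives

variable {a b d : ℝ}

lemma hasDerivAt_etaConj_right_of_neg (ha : a < 0) :
    HasDerivAt (etaConj a) (exp ((b - a) / a)) b := by
  have hfun : etaConj a = fun y => a * exp ((y - a) / a) := funext (etaConj_of_neg ha)
  rw [hfun]
  refine ((((hasDerivAt_id b).sub_const a).div_const a).exp.const_mul a).congr_deriv ?_
  simp only [id]
  field_simp [ha.ne]

lemma hasDerivAt_etaConj_right_of_pos (ha : 0 < a) :
    HasDerivAt (etaConj a) (exp ((a - b) / a)) b := by
  have hfun : etaConj a = fun y => a * (2 - exp ((a - y) / a)) := funext (etaConj_of_pos ha)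
  rw [hfun]
  refine (((((hasDerivAt_id b).const_sub a).div_const a).exp.const_sub 2).const_mul a
    ).congr_deriv ?_
  simp only [id]
  field_simp

lemma hasDerivAt_etaConj_left_of_neg (ha : a < 0) :
    HasDerivAt (fun x => etaConj x b) (-((b - a) / a) * exp ((b - a) / a)) a := by
  have hloc : (fun x => x * exp ((b - x) / x)) =ᶠ[𝓝 a] fun x => etaConj x b := by
    filter_upwards [Iio_mem_nhds ha] with x hx
    rw [etaConj_of_neg hx]
  refine HasDerivAt.congr_of_eventuallyEq ?_ hloc.symm
  refine ((hasDerivAt_id a).mul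
    ((((hasDerivAt_id a).const_sub b).div (hasDerivAt_id a) ha.ne).exp)).congr_deriv ?_
  simp only [id, Pi.div_apply]
  field_simp [ha.ne]
  ring

lemma hasDerivAt_etaConj_left_of_pos (ha : 0 < a) :
    HasDerivAt (fun x => etaConj x b) (2 - (2 - (a - b) / a) * exp ((a - b) / a)) a := by
  have hloc : (fun x => x * (2 - exp ((x - b) / x))) =ᶠ[𝓝 a] fun x => etaConj x b := by
    filter_upwards [Ioi_mem_nhds ha] with x hx
    rw [etaConj_of_pos hx]
  refine HasDerivAt.congr_of_eventuallyEq ?_ hloc.symm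
  refine ((hasDerivAt_id a).mul
    ((((hasDerivAt_id a).sub_const b).div (hasDerivAt_id a) ha.ne').exp.const_sub 2)).congr_deriv ?_
  simp only [id, Pi.div_apply]
  field_simp
  ring

lemma hasDerivAt_Aexp2_right (β : ℝ) (h : HasDerivAt (etaConj a) d b) :
    HasDerivAt (fun y => Aexp2 β a y) ((1 - β) * (1 / 2) * d) b :=
  (((h.const_add a).const_mul ((1 - β) * (1 / 2))).const_add (β * a)).congr_deriv (by ring)

lemma hasDerivAt_Aexp2_left (β : ℝ) (h : HasDerivAt (fun x => etaConj x b) d a) :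
    HasDerivAt (fun x => Aexp2 β x b) (β + (1 - β) * (1 / 2) * (1 + d)) a :=
  ((hasDerivAt_id a).const_mul β |>.congr_deriv (mul_one β)).add
    (((hasDerivAt_id a).add h).const_mul ((1 - β) * (1 / 2)))

end Derivatives

lemma exists_hasDerivAt_etaConj_lt {a b : ℝ} (hab : a < b) (ha : a ≠ 0) :
    ∃ dl dr, HasDerivAt (fun x => etaConj x b) dl a ∧ HasDerivAt (etaConj a) dr b ∧
      dr < 1 + dl := by
  rcases ha.lt_or_gt with hneg | hpos
  · set u := (b - a) / a
    have hu : u < 0 := div_neg_of_pos_of_neg (by linarith) hneg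
    refine ⟨_, _, hasDerivAt_etaConj_left_of_neg hneg, hasDerivAt_etaConj_right_of_neg hneg, ?_⟩
    have := exp_mul_one_sub_lt_one hu.ne
    linarith [mul_neg_of_neg_of_pos hu (exp_pos u)]
  · set u := (a - b) / a
    have hu : u < 0 := div_neg_of_neg_of_pos (by linarith) hpos
    refine ⟨_, _, hasDerivAt_etaConj_left_of_pos hpos, hasDerivAt_etaConj_right_of_pos hpos, ?_⟩
    have := exp_mul_one_sub_lt_one hu.ne
    linarith [exp_lt_one_iff.mpr hu]

theorem Aexp2_partial_min_gt (β : ℝ) (hβ0 : 0 ≤ β) (hβ1 : β < 1)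
    (η₁ η₂ : ℝ) (hlt : η₁ < η₂) (h0 : η₁ ≠ 0) :
    deriv (fun b => Aexp2 β η₁ b) η₂ < deriv (fun a => Aexp2 β a η₂) η₁ := by
  obtain ⟨dl, dr, hl, hr, hd⟩ := exists_hasDerivAt_etaConj_lt hlt h0
  rw [(hasDerivAt_Aexp2_right β hr).deriv, (hasDerivAt_Aexp2_left β hl).deriv]
  have hc : 0 < (1 - β) * (1 / 2) := by linarith
  linarith [mul_lt_mul_of_pos_left hd hc]
end
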